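/- Let X be an ℝ^p-valued random vector and Y a non-degenerate real-valued random variable on a common probability space, and suppose the distribution functions of X and of Y are continuous. Then ξ(Y|X) = 6 · ∫_ℝ ψ_{Y|X}(y,y) dP^Y(y) − 2, where ψ_{Y|X}(y,y') := ∫_Ω E[1_{{Y ≤ y}} | X] · E[1_{{Y ≤ y'}} | X] dP. -/

import Mathlib

open MeasureTheory ProbabilityTheory

/-- Azadkia–Chatterjee's rank correlation `ξ(Y | m)` of a real random variable `Y`
given a sub-σ-algebra `m`. -/
noncomputable def xiSigma {Ω : Type*} (m : MeasurableSpace Ω) [MeasurableSpace Ω]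
    (P : Measure Ω) (Y : Ω → ℝ) : ℝ :=
  (∫ y, variance (P[Set.indicator {ω | y ≤ Y ω} (fun _ => (1 : ℝ)) | m]) P ∂(P.map Y)) /
  (∫ y, variance (Set.indicator {ω | y ≤ Y ω} (fun _ => (1 : ℝ))) P ∂(P.map Y))

/-- Azadkia–Chatterjee's rank correlation `ξ(Y | X)`: conditioning on the σ-algebra
generated by the random vector `X`. -/
noncomputable def xi {Ω α : Type*} [MeasurableSpace Ω] [MeasurableSpace α]
    (P : Measure Ω) (Y : Ω → ℝ) (X : Ω → α) : ℝ :=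
  xiSigma (MeasurableSpace.comap X inferInstance) P Y

/-- The σ-algebra generated by the response variables with index `< i`,
i.e. by `(Y_1, …, Y_{i-1})`; for `i = 0` it is the trivial σ-algebra `⊥`,
so that `xiSigma (sigmaPast Y 0) P (Y 0) = ξ(Y_1 | ∅) = 0`. -/
def sigmaPast {Ω : Type*} {q : ℕ} (Y : Fin q → Ω → ℝ) (i : Fin q) :
    MeasurableSpace Ω :=
  ⨆ j : Fin q, ⨆ _ : j < i, MeasurableSpace.comap (Y j) inferInstance

/-- The extension `T(Y | X)` of Azadkia–Chatterjee's rank correlation to a vector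
`Y = (Y_1, …, Y_q)` of response variables, given the predictor vector `X`:
`T(Y|X) = 1 − (q − ∑_i ξ(Y_i | (X,Y_{i−1},…,Y_1))) / (q − ∑_i ξ(Y_i | (Y_{i−1},…,Y_1)))`. -/
noncomputable def T {Ω α : Type*} [MeasurableSpace Ω] [MeasurableSpace α]
    (P : Measure Ω) {q : ℕ} (Y : Fin q → Ω → ℝ) (X : Ω → α) : ℝ :=
  1 - ((q : ℝ) - ∑ i, xiSigma (MeasurableSpace.comap X inferInstance ⊔ sigmaPast Y i) P (Y i)) /
      ((q : ℝ) - ∑ i, xiSigma (sigmaPast Y i) P (Y i))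

/-- A real random variable is non-degenerate if it is not almost surely constant. -/
def Nondegenerate {Ω : Type*} [MeasurableSpace Ω] (P : Measure Ω) (Y : Ω → ℝ) : Prop :=
  ¬ ∃ c : ℝ, ∀ᵐ ω ∂P, Y ω = c

/-- The integral transform `ψ_{Y|X}(y,y') = ∫_Ω E[1_{Y ≤ y} | X] · E[1_{Y ≤ y'} | X] dP`. -/
noncomputable def psi {Ω α : Type*} [MeasurableSpace Ω] [MeasurableSpace α]
    (P : Measure Ω) (Y : Ω → ℝ) (X : Ω → α) (y y' : ℝ) : ℝ :=
  ∫ ω,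
    (MeasureTheory.condExp (MeasurableSpace.comap X inferInstance) P
        (Set.indicator {ω' | Y ω' ≤ y} (fun _ => (1 : ℝ))) ω) *
    (MeasureTheory.condExp (MeasurableSpace.comap X inferInstance) P
        (Set.indicator {ω' | Y ω' ≤ y'} (fun _ => (1 : ℝ))) ω) ∂P

/-! Writing `F` for the distribution function of `Y`, continuity of `F` makes every level set
`{Y = y}` null, so `1_{y ≤ Y} = 1 - 1_{Y ≤ y}` almost surely and both variances in `ξ` can be
expressed through `1_{Y ≤ y}`: the numerator integrand is `ψ(y,y) - F(y)²` and the denominator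
integrand `F(y) - F(y)²`. Since `F(Y)` is uniformly distributed on `(0,1]`, `∫ F dP^Y = 1/2` and
`∫ F² dP^Y = 1/3`, so the denominator is `1/6` and the numerator `∫ ψ(y,y) dP^Y(y) - 1/3`. -/

open Set Filter Topology

namespace ProbabilityTheory

section ContinuousCDF

variable {μ : Measure ℝ} [IsProbabilityMeasure μ]

lemma measure_singleton_eq_zero_of_continuous_cdf (hμ : Continuous (cdf μ)) (a : ℝ) :
    μ {a} = 0 := by
  rw [← measure_cdf μ, StieltjesFunction.measure_singleton,
    hμ.continuousWithinAt.leftLim_eq, sub_self, ENNReal.ofReal_zero]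

lemma measure_cdf_le_eq_ofReal (hμ : Continuous (cdf μ)) {t : ℝ} (ht : t < 1) :
    μ {y | cdf μ y ≤ t} = ENNReal.ofReal t := by
  set S := {y | cdf μ y ≤ t}
  obtain ⟨b, hb⟩ := ((tendsto_cdf_atTop μ).eventually (eventually_gt_nhds ht)).exists
  have hS_bdd : BddAbove S :=
    ⟨b, fun z hz => le_of_not_gt fun hbz => (hb.trans_le (monotone_cdf μ hbz.le)).not_ge hz⟩
  rcases S.eq_empty_or_nonempty with hS | hS
  · have ht0 : t ≤ 0 := by
      by_contra! h
      obtain ⟨y, hy⟩ := ((tendsto_cdf_atBot μ).eventually (eventually_lt_nhds h)).exists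
      exact hS.subset (show y ∈ S from hy.le)
    rw [hS, measure_empty, ENNReal.ofReal_of_nonpos ht0]
  · set a := sSup S
    have ha : a ∈ S := (isClosed_le hμ continuous_const).csSup_mem hS hS_bdd
    have hSa : S = Iic a :=
      Subset.antisymm (fun z hz => le_csSup hS_bdd hz) (fun z hz => (monotone_cdf μ hz).trans ha)
    -- `a` is the last point of `S`, so continuity of `cdf μ` forces the value `t` there
    have hcdf : cdf μ a = t := by
      refine le_antisymm ha (not_lt.1 fun hlt => ?_)
      obtain ⟨x, hxt, hax⟩ := (((hμ.continuousAt.eventually (gt_mem_nhds hlt)).filter_mono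
        nhdsWithin_le_nhds).and (self_mem_nhdsWithin : Ioi a ∈ 𝓝[>] a)).exists
      exact (le_csSup hS_bdd (show x ∈ S from hxt.le)).not_gt hax
    rw [hSa, ← ofReal_cdf, hcdf]

lemma map_cdf_eq_volume_restrict (hμ : Continuous (cdf μ)) :
    μ.map (cdf μ) = volume.restrict (Ioc 0 1) := by
  refine Measure.ext_of_Iic _ _ fun t => ?_
  rw [Measure.map_apply hμ.measurable measurableSet_Iic,
    Measure.restrict_apply' measurableSet_Ioc]
  rcases lt_or_ge t 1 with ht | ht
  · rw [Iic_inter_Ioc_of_le ht.le, Real.volume_Ioc, sub_zero]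
    exact measure_cdf_le_eq_ofReal hμ ht
  · rw [inter_eq_right.2 fun z hz => hz.2.trans ht, Real.volume_Ioc, sub_zero,
      ENNReal.ofReal_one, ← measure_univ (μ := μ)]
    exact congrArg μ (eq_univ_of_forall fun y => (cdf_le_one μ y).trans ht)

lemma integral_cdf_pow (hμ : Continuous (cdf μ)) (n : ℕ) :
    ∫ y, cdf μ y ^ n ∂μ = 1 / (n + 1) := by
  rw [← integral_map hμ.measurable.aemeasurable (continuous_pow n).aestronglyMeasurable,
    map_cdf_eq_volume_restrict hμ, ← intervalIntegral.integral_of_le zero_le_one, integral_pow]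
  simp

end ContinuousCDF

lemma variance_indicator_one {Ω : Type*} [MeasurableSpace Ω] {P : Measure Ω}
    [IsProbabilityMeasure P] {s : Set Ω} (hs : MeasurableSet s) :
    Var[s.indicator (fun _ => (1 : ℝ)); P] = P.real s - P.real s ^ 2 := by
  have hsq : s.indicator (fun _ => (1 : ℝ)) ^ 2 = s.indicator (fun _ => 1) := by
    ext ω
    by_cases h : ω ∈ s <;> simp [h]
  rw [variance_eq_sub (memLp_indicator_const 2 hs (1 : ℝ) (Or.inr (measure_ne_top _ _))), hsq,
    integral_indicator_const _ hs, smul_eq_mul, mul_one]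

lemma variance_condExp {Ω : Type*} {m : MeasurableSpace Ω} [mΩ : MeasurableSpace Ω]
    {P : Measure Ω} [IsProbabilityMeasure P] (hm : m ≤ mΩ) {f : Ω → ℝ} (hf : MemLp f 2 P) :
    Var[P[f | m]; P] = ∫ ω, P[f | m] ω * P[f | m] ω ∂P - (∫ ω, f ω ∂P) ^ 2 := by
  simp only [variance_eq_sub (hf.condExp one_le_two), integral_condExp hm, Pi.pow_apply, sq]

lemma indicator_ge_ae_eq_one_sub_indicator_le {Ω : Type*} [MeasurableSpace Ω] {P : Measure Ω}
    {Y : Ω → ℝ} {y : ℝ} (hy : P {ω | Y ω = y} = 0) :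
    {ω | y ≤ Y ω}.indicator (fun _ => (1 : ℝ)) =ᵐ[P]
      fun ω => 1 - {ω | Y ω ≤ y}.indicator (fun _ => (1 : ℝ)) ω := by
  filter_upwards [measure_eq_zero_iff_ae_notMem.1 hy] with ω hω
  rcases lt_or_gt_of_ne (hω : Y ω ≠ y) with h | h <;> simp [indicator, h.le, h.not_ge]

noncomputable def psiSigma {Ω : Type*} (m : MeasurableSpace Ω) [MeasurableSpace Ω]
    (P : Measure Ω) (Y : Ω → ℝ) (y y' : ℝ) : ℝ :=
  ∫ ω, P[{ω' | Y ω' ≤ y}.indicator (fun _ => (1 : ℝ)) | m] ω *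
    P[{ω' | Y ω' ≤ y'}.indicator (fun _ => (1 : ℝ)) | m] ω ∂P

section Xi

variable {Ω : Type*} {m : MeasurableSpace Ω} [mΩ : MeasurableSpace Ω] {P : Measure Ω}
  {Y : Ω → ℝ}

lemma cdf_map_apply [IsProbabilityMeasure P] (hY : Measurable Y) (y : ℝ) :
    cdf (P.map Y) y = P.real {ω | Y ω ≤ y} := by
  have := Measure.isProbabilityMeasure_map (μ := P) hY.aemeasurable
  rw [cdf_eq_real, measureReal_def, measureReal_def, Measure.map_apply hY measurableSet_Iic]
  rfl

lemma integral_indicator_le_eq_cdf [IsProbabilityMeasure P] (hY : Measurable Y) (y : ℝ) :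
    ∫ ω, {ω | Y ω ≤ y}.indicator (fun _ => (1 : ℝ)) ω ∂P = cdf (P.map Y) y := by
  rw [integral_indicator_const _ (measurableSet_le hY measurable_const), smul_eq_mul, mul_one,
    cdf_map_apply hY]

lemma measure_eq_eq_zero_of_continuous_cdf [IsProbabilityMeasure P] (hY : Measurable Y)
    (hF : Continuous (cdf (P.map Y))) (y : ℝ) : P {ω | Y ω = y} = 0 := by
  have := Measure.isProbabilityMeasure_map (μ := P) hY.aemeasurable
  rw [← measure_singleton_eq_zero_of_continuous_cdf hF y,
    Measure.map_apply hY (measurableSet_singleton y)]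
  rfl

lemma condExp_indicator_le_mem_Icc (y : ℝ) :
    ∀ᵐ ω ∂P, P[{ω' | Y ω' ≤ y}.indicator (fun _ => (1 : ℝ)) | m] ω ∈ Icc 0 1 := by
  have hbdd : ∀ᵐ ω ∂P, |{ω' | Y ω' ≤ y}.indicator (fun _ => (1 : ℝ)) ω| ≤ 1 :=
    ae_of_all _ fun ω => by by_cases h : Y ω ≤ y <;> simp [h]
  have hnonneg : 0 ≤ᵐ[P] {ω' | Y ω' ≤ y}.indicator (fun _ => (1 : ℝ)) :=
    ae_of_all _ fun ω => indicator_nonneg (fun _ _ => zero_le_one) ω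
  filter_upwards [condExp_nonneg (m := m) hnonneg, ae_bdd_abs_condExp_of_ae_bdd_abs (m := m) hbdd]
    with ω h0 h1
  exact ⟨h0, (le_abs_self _).trans h1⟩

lemma monotone_psiSigma_diag [IsProbabilityMeasure P] (hY : Measurable Y) :
    Monotone fun y => psiSigma m P Y y y := by
  intro y y' hyy'
  have hs : ∀ z : ℝ, MeasurableSet {ω | Y ω ≤ z} := fun z => measurableSet_le hY measurable_const
  have hsq : ∀ z : ℝ, Integrable (fun ω => P[{ω' | Y ω' ≤ z}.indicator (fun _ => (1 : ℝ)) | m] ω *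
      P[{ω' | Y ω' ≤ z}.indicator (fun _ => (1 : ℝ)) | m] ω) P := fun z => by
    simpa only [sq] using
      ((memLp_indicator_const 2 (hs z) (1 : ℝ) (Or.inr (measure_ne_top _ _))).condExp
        one_le_two).integrable_sq
  have hint : ∀ z : ℝ, Integrable ({ω | Y ω ≤ z}.indicator (fun _ => (1 : ℝ))) P := fun z =>
    (integrable_const 1).indicator (hs z)
  have hmono := condExp_mono (m := m) (hint y) (hint y') (ae_of_all _ fun ω =>
      indicator_le_indicator_of_subset (fun ω (h : Y ω ≤ y) => h.trans hyy')
        (fun _ => zero_le_one) ω)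
  refine integral_mono_ae (hsq y) (hsq y') ?_
  filter_upwards [hmono, condExp_indicator_le_mem_Icc y] with ω h h0
  exact mul_le_mul h h h0.1 (h0.1.trans h)

lemma integrable_psiSigma_diag [IsProbabilityMeasure P] (hY : Measurable Y) {ν : Measure ℝ}
    [IsFiniteMeasure ν] : Integrable (fun y => psiSigma m P Y y y) ν := by
  refine .of_bound (monotone_psiSigma_diag hY).measurable.aestronglyMeasurable 1
    (ae_of_all _ fun y => ?_)
  refine (norm_integral_le_of_norm_le_const (C := 1) ?_).trans (by simp)
  filter_upwards [condExp_indicator_le_mem_Icc y] with ω h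
  rw [norm_mul, Real.norm_of_nonneg h.1]
  exact mul_le_one₀ h.2 h.1 h.2

lemma variance_condExp_indicator_ge [IsProbabilityMeasure P] (hm : m ≤ mΩ) (hY : Measurable Y)
    (hF : Continuous (cdf (P.map Y))) (y : ℝ) :
    Var[P[{ω | y ≤ Y ω}.indicator (fun _ => (1 : ℝ)) | m]; P] =
      psiSigma m P Y y y - cdf (P.map Y) y ^ 2 := by
  have hs : MeasurableSet {ω | Y ω ≤ y} := measurableSet_le hY measurable_const
  have hc : P[{ω | y ≤ Y ω}.indicator (fun _ => (1 : ℝ)) | m] =ᵐ[P]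
      fun ω => 1 - P[{ω | Y ω ≤ y}.indicator (fun _ => (1 : ℝ)) | m] ω :=
    (condExp_congr_ae (indicator_ge_ae_eq_one_sub_indicator_le
      (measure_eq_eq_zero_of_continuous_cdf hY hF y))).trans
      ((condExp_sub (integrable_const 1) ((integrable_const 1).indicator hs) m).trans
        (by rw [condExp_const hm]; rfl))
  rw [variance_congr hc,
    variance_const_sub (stronglyMeasurable_condExp.mono hm).aestronglyMeasurable,
    variance_condExp hm (memLp_indicator_const 2 hs (1 : ℝ) (Or.inr (measure_ne_top _ _))),
    integral_indicator_le_eq_cdf hY]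
  rfl

lemma variance_indicator_ge [IsProbabilityMeasure P] (hY : Measurable Y)
    (hF : Continuous (cdf (P.map Y))) (y : ℝ) :
    Var[{ω | y ≤ Y ω}.indicator (fun _ => (1 : ℝ)); P] = cdf (P.map Y) y - cdf (P.map Y) y ^ 2 := by
  rw [variance_congr (indicator_ge_ae_eq_one_sub_indicator_le
      (measure_eq_eq_zero_of_continuous_cdf hY hF y)),
    variance_const_sub ((measurable_const.indicator
      (measurableSet_le hY measurable_const)).aestronglyMeasurable),
    variance_indicator_one (measurableSet_le hY measurable_const), cdf_map_apply hY]

theorem xiSigma_eq_of_continuous_cdf [IsProbabilityMeasure P] (hm : m ≤ mΩ) (hY : Measurable Y)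
    (hF : Continuous (cdf (P.map Y))) :
    xiSigma m P Y = 6 * ∫ y, psiSigma m P Y y y ∂(P.map Y) - 2 := by
  have := Measure.isProbabilityMeasure_map (μ := P) hY.aemeasurable
  have hFint : ∀ n : ℕ, Integrable (fun y => cdf (P.map Y) y ^ n) (P.map Y) := fun n =>
    .of_bound (hF.pow n).aestronglyMeasurable 1 (ae_of_all _ fun y => by
      rw [norm_pow, Real.norm_of_nonneg (cdf_nonneg _ y)]
      exact pow_le_one₀ (cdf_nonneg _ y) (cdf_le_one _ y))
  have hF1 := integral_cdf_pow hF 1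
  have hF2 := integral_cdf_pow hF 2
  simp only [pow_one] at hF1
  have hnum : ∫ y, Var[P[{ω | y ≤ Y ω}.indicator (fun _ => (1 : ℝ)) | m]; P] ∂(P.map Y) =
      ∫ y, psiSigma m P Y y y ∂(P.map Y) - 1 / 3 := by
    simp_rw [variance_condExp_indicator_ge hm hY hF]
    rw [integral_sub (integrable_psiSigma_diag hY) (hFint 2), hF2]
    norm_num
  have hden : ∫ y, Var[{ω | y ≤ Y ω}.indicator (fun _ => (1 : ℝ)); P] ∂(P.map Y) = 1 / 6 := by
    simp_rw [variance_indicator_ge hY hF]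
    rw [integral_sub (by simpa using hFint 1) (hFint 2), hF1, hF2]
    norm_num
  rw [xiSigma, hnum, hden]
  ring

end Xi

end ProbabilityTheory

theorem xi_copula_representation_of_continuous_general
    {Ω : Type*} [MeasurableSpace Ω] (P : Measure Ω) [IsProbabilityMeasure P]
    {p : ℕ} (X : Ω → (Fin p → ℝ)) (Y : Ω → ℝ)
    (hX : Measurable X) (hY : Measurable Y)
    (hFY : Continuous (fun y : ℝ => (P {ω | Y ω ≤ y}).toReal)) :
    xi P Y X = 6 * (∫ y, psi P Y X y y ∂(P.map Y)) - 2 := by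
  have hF : Continuous (cdf (P.map Y)) := by
    refine hFY.congr fun y => ?_
    rw [cdf_map_apply hY, measureReal_def]
  exact xiSigma_eq_of_continuous_cdf hX.comap_le hY hF

theorem xi_copula_representation_of_continuous
    {Ω : Type*} [MeasurableSpace Ω] (P : Measure Ω) [IsProbabilityMeasure P]
    {p : ℕ} (X : Ω → (Fin p → ℝ)) (Y : Ω → ℝ)
    (hX : Measurable X) (hY : Measurable Y) (hnd : Nondegenerate P Y)
    (hFX : Continuous (fun x : Fin p → ℝ => (P {ω | ∀ j, X ω j ≤ x j}).toReal))
    (hFY : Continuous (fun y : ℝ => (P {ω | Y ω ≤ y}).toReal)) :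
    xi P Y X = 6 * (∫ y, psi P Y X y y ∂(P.map Y)) - 2 :=
  xi_copula_representation_of_continuous_general P X Y hX hY hFY
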